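/- Suppose each player k has a concave valuation v_k : ℝ^m → ℝ, nonnegative on nonnegative bundles, with v_i(0) = 0 for a fixed player i. Let x* be a feasible allocation maximizing Π_k v_k(x_k)^{b_k} over all feasible allocations, with v_k(x*_k) > 0 for every k, and let x*_{-i} be any feasible allocation. For each k ≠ i define the proportional change d_k by v_k((x*_{-i})_k) = (1 + d_k)·v_k(x*_k). Then Σ_{k≠i} b_k·d_k ≤ b_i. -/

import Mathlib

/-!
Moving from the optimum `x*` towards any feasible `y` along `(1 - t) • x* + t • y` stays feasible,
and by concavity player `k` then gets at least `v_k(x*_k) (1 + t e_k)` with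
`e_k = v_k(y_k) / v_k(x*_k) - 1`. Optimality of `x*` for the Nash product therefore says that
`t ↦ ∑ b_k log (1 + t e_k)` is maximal at `t = 0` on `[0, 1]`, so its derivative `∑ b_k e_k` at `0`
is nonpositive. For `y = x*_{-i}` we have `e_i = -1` and `e_k = d_k` for `k ≠ i`.
-/

open Finset Real Set Filter Topology

lemma deriv_nonpos_of_isLocalMaxOn_Icc {f : ℝ → ℝ} {f' : ℝ} (hmax : IsLocalMaxOn f (Icc 0 1) 0)
    (hf : HasDerivAt f f' 0) : f' ≤ 0 := by
  have hcone : (1 : ℝ) - 0 ∈ posTangentConeAt (Icc 0 1) (0 : ℝ) :=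
    sub_mem_posTangentConeAt_of_segment_subset (segment_eq_Icc zero_le_one).subset
  simpa using hmax.hasFDerivWithinAt_nonpos hf.hasFDerivAt.hasFDerivWithinAt hcone

lemma hasDerivAt_sum_mul_log_one_add_mul {ι : Type*} (s : Finset ι) (b e : ι → ℝ) :
    HasDerivAt (fun t ↦ ∑ k ∈ s, b k * log (1 + t * e k)) (∑ k ∈ s, b k * e k) 0 := by
  refine HasDerivAt.fun_sum fun k _ ↦ ?_
  have h := ((((hasDerivAt_id (0 : ℝ)).mul_const (e k)).const_add 1).log
    (by simp)).const_mul (b k)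
  simpa using h

lemma sum_mul_log_nonpos_of_prod_mul_rpow_le {ι : Type*} [Fintype ι] {a c b : ι → ℝ}
    (ha : ∀ k, 0 < a k) (hc : ∀ k, 0 < c k) (h : ∏ k, (a k * c k) ^ b k ≤ ∏ k, a k ^ b k) :
    ∑ k, b k * log (c k) ≤ 0 := by
  have log_prod_rpow : ∀ w : ι → ℝ, (∀ k, 0 < w k) →
      log (∏ k, w k ^ b k) = ∑ k, b k * log (w k) := fun w hw ↦ by
    rw [log_prod fun k _ ↦ (rpow_pos_of_pos (hw k) _).ne']
    exact sum_congr rfl fun k _ ↦ log_rpow (hw k) _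
  have hlog := log_le_log (prod_pos fun k _ ↦ rpow_pos_of_pos (mul_pos (ha k) (hc k)) _) h
  rw [log_prod_rpow _ fun k ↦ mul_pos (ha k) (hc k), log_prod_rpow _ ha] at hlog
  simp only [log_mul (ha _).ne' (hc _).ne', mul_add, sum_add_distrib] at hlog
  linarith

def feasibleAllocations (ι κ : Type*) [Fintype ι] : Set (ι → κ → ℝ) :=
  {x | (∀ k j, 0 ≤ x k j) ∧ ∀ j, ∑ k, x k j ≤ 1}

lemma convex_feasibleAllocations (ι κ : Type*) [Fintype ι] :
    Convex ℝ (feasibleAllocations ι κ) := by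
  rintro x ⟨hx_nonneg, hx_feas⟩ y ⟨hy_nonneg, hy_feas⟩ s t hs ht hst
  refine ⟨fun k j ↦ ?_, fun j ↦ ?_⟩
  · have := hx_nonneg k j
    have := hy_nonneg k j
    simp only [Pi.add_apply, Pi.smul_apply, smul_eq_mul]
    positivity
  · simp only [Pi.add_apply, Pi.smul_apply, smul_eq_mul, sum_add_distrib, ← mul_sum]
    nlinarith [hx_feas j, hy_feas j]

lemma ConcaveOn.mul_one_add_mul_div_sub_one_le {E : Type*} [AddCommGroup E] [Module ℝ E]
    {f : E → ℝ} (hf : ConcaveOn ℝ univ f) {x y : E} (hx : f x ≠ 0) {t : ℝ} (ht0 : 0 ≤ t)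
    (ht1 : t ≤ 1) : f x * (1 + t * (f y / f x - 1)) ≤ f ((1 - t) • x + t • y) := by
  have h := hf.2 (mem_univ x) (mem_univ y) (sub_nonneg.2 ht1) ht0 (by ring)
  rw [smul_eq_mul, smul_eq_mul] at h
  calc f x * (1 + t * (f y / f x - 1)) = (1 - t) * f x + t * f y := by field_simp; ring
    _ ≤ _ := h

theorem sum_mul_div_le_sum_of_isMaxOn_prod_rpow {ι E : Type*} [Fintype ι] [AddCommGroup E]
    [Module ℝ E] {S : Set (ι → E)} (hS : Convex ℝ S) {v : ι → E → ℝ}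
    (hv : ∀ k, ConcaveOn ℝ univ (v k)) {b : ι → ℝ} (hb : ∀ k, 0 ≤ b k) {x y : ι → E}
    (hx : x ∈ S) (hy : y ∈ S) (hmax : IsMaxOn (fun z ↦ ∏ k, v k (z k) ^ b k) S x)
    (hpos : ∀ k, 0 < v k (x k)) :
    ∑ k, b k * (v k (y k) / v k (x k)) ≤ ∑ k, b k := by
  set e : ι → ℝ := fun k ↦ v k (y k) / v k (x k) - 1
  have hlocal : IsLocalMaxOn (fun t ↦ ∑ k, b k * log (1 + t * e k)) (Icc 0 1) 0 := by
    have hev : ∀ᶠ t in 𝓝 (0 : ℝ), ∀ k, 0 < 1 + t * e k := eventually_all.2 fun k ↦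
      continuousAt_const.eventually_lt (by fun_prop) (by simp)
    filter_upwards [nhdsWithin_le_nhds hev, self_mem_nhdsWithin] with t hte ⟨ht0, ht1⟩
    simp only [zero_mul, add_zero, log_one, mul_zero, sum_const_zero]
    refine sum_mul_log_nonpos_of_prod_mul_rpow_le hpos hte ?_
    calc ∏ k, (v k (x k) * (1 + t * e k)) ^ b k
        ≤ ∏ k, v k (((1 - t) • x + t • y) k) ^ b k :=
          prod_le_prod (fun k _ ↦ (rpow_pos_of_pos (mul_pos (hpos k) (hte k)) _).le)
            fun k _ ↦ rpow_le_rpow (mul_pos (hpos k) (hte k)).le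
              ((hv k).mul_one_add_mul_div_sub_one_le (hpos k).ne' ht0 ht1) (hb k)
      _ ≤ ∏ k, v k (x k) ^ b k := hmax (hS hx hy (sub_nonneg.2 ht1) ht0 (by ring))
  have hderiv := deriv_nonpos_of_isLocalMaxOn_Icc hlocal (hasDerivAt_sum_mul_log_one_add_mul _ b e)
  simp only [e, mul_sub, sum_sub_distrib, mul_one] at hderiv
  linarith

theorem stmt_15_general {n m : ℕ} (i : Fin n)
    (v : Fin n → (Fin m → ℝ) → ℝ) (b : Fin n → ℝ)
    (hb : ∀ k, 1 ≤ b k)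
    (hv_concave : ∀ k, ConcaveOn ℝ Set.univ (v k))
    (hvi_zero : v i 0 = 0)
    (xstar : Fin n → Fin m → ℝ)
    (hxstar_nonneg : ∀ k j, 0 ≤ xstar k j) (hxstar_feas : ∀ j, ∑ k, xstar k j ≤ 1)
    (hxstar_max : ∀ x : Fin n → Fin m → ℝ,
      (∀ k j, 0 ≤ x k j) → (∀ j, ∑ k, x k j ≤ 1) →
      ∏ k, v k (x k) ^ b k ≤ ∏ k, v k (xstar k) ^ b k)
    (hpos : ∀ k, 0 < v k (xstar k))
    -- x*_{-i}, extended by giving the empty bundle to player i, is feasible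
    (xmi : Fin n → Fin m → ℝ)
    (hxmi_nonneg : ∀ k j, 0 ≤ xmi k j) (hxmi_feas : ∀ j, ∑ k, xmi k j ≤ 1)
    (hxmi_i : xmi i = 0)
    (d : Fin n → ℝ)
    (hd : ∀ k, k ≠ i → v k (xmi k) = (1 + d k) * v k (xstar k)) :
    ∑ k ∈ univ.erase i, b k * d k ≤ b i := by
  have key := sum_mul_div_le_sum_of_isMaxOn_prod_rpow (convex_feasibleAllocations (Fin n) (Fin m))
    hv_concave (fun k ↦ zero_le_one.trans (hb k)) ⟨hxstar_nonneg, hxstar_feas⟩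
    ⟨hxmi_nonneg, hxmi_feas⟩ (fun x hx ↦ hxstar_max x hx.1 hx.2) hpos
  have hratio : ∀ k ∈ univ.erase i, b k * (v k (xmi k) / v k (xstar k)) = b k + b k * d k :=
    fun k hk ↦ by rw [hd k (ne_of_mem_erase hk), mul_div_cancel_right₀ _ (hpos k).ne']; ring
  rw [← add_sum_erase _ _ (mem_univ i), ← add_sum_erase _ _ (mem_univ i), hxmi_i, hvi_zero,
    zero_div, mul_zero, zero_add, sum_congr rfl hratio, sum_add_distrib] at key
  linarith

/-- If `x*` maximizes the weighted Nash product and `x*_{-i}` is any feasible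
allocation giving the empty bundle to player `i`, then the proportional changes `d_k` defined by
`v_k((x*_{-i})_k) = (1 + d_k)·v_k(x*_k)` satisfy `∑_{k≠i} b_k·d_k ≤ b_i`. -/
theorem stmt_15 {n m : ℕ} (hn : 2 ≤ n) (i : Fin n)
    (v : Fin n → (Fin m → ℝ) → ℝ) (b : Fin n → ℝ)
    (hb : ∀ k, 1 ≤ b k)
    (hv_nonneg : ∀ k (y : Fin m → ℝ), (∀ j, 0 ≤ y j) → 0 ≤ v k y)
    (hv_concave : ∀ k, ConcaveOn ℝ Set.univ (v k))
    (hvi_zero : v i 0 = 0)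
    (xstar : Fin n → Fin m → ℝ)
    (hxstar_nonneg : ∀ k j, 0 ≤ xstar k j) (hxstar_feas : ∀ j, ∑ k, xstar k j ≤ 1)
    (hxstar_max : ∀ x : Fin n → Fin m → ℝ,
      (∀ k j, 0 ≤ x k j) → (∀ j, ∑ k, x k j ≤ 1) →
      ∏ k, v k (x k) ^ b k ≤ ∏ k, v k (xstar k) ^ b k)
    (hpos : ∀ k, 0 < v k (xstar k))
    -- x*_{-i}, extended by giving the empty bundle to player i, is feasible
    (xmi : Fin n → Fin m → ℝ)
    (hxmi_nonneg : ∀ k j, 0 ≤ xmi k j) (hxmi_feas : ∀ j, ∑ k, xmi k j ≤ 1)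
    (hxmi_i : xmi i = 0)
    (d : Fin n → ℝ)
    (hd : ∀ k, k ≠ i → v k (xmi k) = (1 + d k) * v k (xstar k)) :
    ∑ k ∈ univ.erase i, b k * d k ≤ b i :=
  stmt_15_general i v b hb hv_concave hvi_zero xstar hxstar_nonneg hxstar_feas hxstar_max hpos xmi
    hxmi_nonneg hxmi_feas hxmi_i d hd
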